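/- Let M be the n×n block matrix [[E, S],[T, F]] where E is an i×i matrix with diagonal β and off-diagonal γ, F is an (n-i)×(n-i) matrix with diagonal τ and off-diagonal ξ, S = μ·(all-ones i×(n-i)), T = ν·(all-ones (n-i)×i), with 1 ≤ i ≤ n-1. Then det(λI - M) = (λ - (τ-ξ))^(n-i-1) · (λ - (β-γ))^(i-1) · (λ² - G₃λ + G₄), where G₃ = β + τ + (i-1)γ + (n-i-1)ξ and G₄ = (β + (i-1)γ)(τ + (n-i-1)ξ) - i(n-i)μν. -/
import Mathlib
open Matrix

lemma aux_det (k m : ℕ) (a b γ ξ μ ν : ℝ) (ha : a ≠ 0) (hb : b ≠ 0) :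
    (Matrix.diagonal (Sum.elim (fun _ : Fin k => a) (fun _ : Fin m => b)) +
      (Matrix.of (Sum.elim (fun _ : Fin k => ![(1:ℝ),0]) (fun _ : Fin m => ![0,1]))) *
      ((-(Matrix.of ![![γ,μ],![ν,ξ]])) *
        (Matrix.of (Sum.elim (fun _ : Fin k => ![(1:ℝ),0]) (fun _ : Fin m => ![0,1])))ᵀ)).det
    = a ^ k * b ^ m *
        ((1 - γ * k * a⁻¹) * (1 - ξ * m * b⁻¹) - μ * ν * k * m * a⁻¹ * b⁻¹) := by
  set d : Fin k ⊕ Fin m → ℝ := Sum.elim (fun _ => a) (fun _ => b) with hd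
  set dinv : Fin k ⊕ Fin m → ℝ := Sum.elim (fun _ => a⁻¹) (fun _ => b⁻¹) with hdinv
  set U : Matrix (Fin k ⊕ Fin m) (Fin 2) ℝ :=
    Matrix.of (Sum.elim (fun _ : Fin k => ![(1:ℝ),0]) (fun _ : Fin m => ![0,1])) with hU
  have hdetD : (Matrix.diagonal d).det = a ^ k * b ^ m := by
    simp [Matrix.det_diagonal, Fintype.prod_sum_type, hd]
  have hunit : IsUnit (Matrix.diagonal d).det := by
    simp [hdetD, ha, hb]
  have hinvD : (Matrix.diagonal d)⁻¹ = Matrix.diagonal dinv := by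
    apply Matrix.inv_eq_right_inv
    rw [Matrix.diagonal_mul_diagonal]
    have h1 : (fun i => d i * dinv i) = fun _ : Fin k ⊕ Fin m => (1:ℝ) := by
      funext x
      rcases x with i | j
      · show a * a⁻¹ = 1; field_simp
      · show b * b⁻¹ = 1; field_simp
    rw [h1, Matrix.diagonal_one]
  rw [Matrix.det_add_mul _ _ hunit, hdetD, hinvD]
  congr 1
  have hW : Uᵀ * (Matrix.diagonal dinv * U)
      = Matrix.of ![![(k:ℝ)*a⁻¹, 0], ![0, (m:ℝ)*b⁻¹]] := by
    ext p q
    rw [Matrix.mul_apply]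
    simp only [Matrix.mul_apply, Fintype.sum_sum_type, Matrix.diagonal_apply,
      Matrix.transpose_apply, hU, hdinv, Matrix.of_apply, Sum.elim_inl, Sum.elim_inr]
    fin_cases p <;> fin_cases q <;>
      simp [Finset.sum_ite_eq, Finset.sum_const, Finset.card_univ, mul_comm]
  rw [Matrix.det_fin_two]
  simp only [Matrix.mul_assoc, hW]
  simp [Matrix.mul_apply, Fin.sum_univ_two, Matrix.one_apply]
  ring

theorem det_block_matrix_nondiagonal
    (n k : ℕ) (hn : 2 ≤ n) (hk1 : 1 ≤ k) (hk2 : k ≤ n - 1)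
    (β γ τ ξ μ ν lam : ℝ)
    (E : Matrix (Fin k) (Fin k) ℝ)
    (hE : ∀ i j, E i j = if i = j then β else γ)
    (F : Matrix (Fin (n - k)) (Fin (n - k)) ℝ)
    (hF : ∀ i j, F i j = if i = j then τ else ξ)
    (S : Matrix (Fin k) (Fin (n - k)) ℝ) (hS : ∀ i j, S i j = μ)
    (T : Matrix (Fin (n - k)) (Fin k) ℝ) (hT : ∀ i j, T i j = ν)
    (M : Matrix (Fin k ⊕ Fin (n - k)) (Fin k ⊕ Fin (n - k)) ℝ)
    (hM : M = Matrix.fromBlocks E S T F) :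
    (lam • (1 : Matrix (Fin k ⊕ Fin (n - k)) (Fin k ⊕ Fin (n - k)) ℝ) - M).det
      = (lam - (τ - ξ)) ^ (n - k - 1) * (lam - (β - γ)) ^ (k - 1) *
        (lam ^ 2 - (β + τ + ((k : ℝ) - 1) * γ + ((n : ℝ) - (k : ℝ) - 1) * ξ) * lam
          + ((β + ((k : ℝ) - 1) * γ) * (τ + ((n : ℝ) - (k : ℝ) - 1) * ξ)
             - (k : ℝ) * ((n : ℝ) - (k : ℝ)) * μ * ν)) := by
  have hkn : k ≤ n := le_trans hk2 (Nat.sub_le n 1)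
  have hm1 : 1 ≤ n - k := by omega
  have hcast : ((n - k : ℕ) : ℝ) = (n : ℝ) - (k : ℝ) := by
    push_cast [Nat.cast_sub hkn]; ring
  set f : ℝ → ℝ := fun x =>
    (x • (1 : Matrix (Fin k ⊕ Fin (n - k)) (Fin k ⊕ Fin (n - k)) ℝ) - M).det with hf_def
  set g : ℝ → ℝ := fun x =>
    (x - (τ - ξ)) ^ (n - k - 1) * (x - (β - γ)) ^ (k - 1) *
        (x ^ 2 - (β + τ + ((k : ℝ) - 1) * γ + ((n : ℝ) - (k : ℝ) - 1) * ξ) * x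
          + ((β + ((k : ℝ) - 1) * γ) * (τ + ((n : ℝ) - (k : ℝ) - 1) * ξ)
             - (k : ℝ) * ((n : ℝ) - (k : ℝ)) * μ * ν)) with hg_def
  have hfg : f = g := by
    have hdense : Dense (({β - γ, τ - ξ} : Set ℝ)ᶜ) :=
      Set.Countable.dense_compl ℝ ((Set.countable_singleton _).insert _)
    have hfc : Continuous f := by
      apply Continuous.matrix_det
      exact (continuous_id.smul continuous_const).sub continuous_const
    have hgc : Continuous g := by fun_prop
    refine hfc.ext_on hdense hgc ?_
    intro x hx
    simp only [Set.mem_compl_iff, Set.mem_insert_iff, Set.mem_singleton_iff, not_or] at hx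
    obtain ⟨hxa, hxb⟩ := hx
    set a : ℝ := x - (β - γ) with ha_def
    set b : ℝ := x - (τ - ξ) with hb_def
    have ha : a ≠ 0 := sub_ne_zero.mpr hxa
    have hb : b ≠ 0 := sub_ne_zero.mpr hxb
    have hmat : x • (1 : Matrix (Fin k ⊕ Fin (n - k)) (Fin k ⊕ Fin (n - k)) ℝ) - M
        = Matrix.diagonal (Sum.elim (fun _ : Fin k => a) (fun _ : Fin (n-k) => b)) +
          (Matrix.of (Sum.elim (fun _ : Fin k => ![(1:ℝ),0]) (fun _ : Fin (n-k) => ![0,1]))) *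
          ((-(Matrix.of ![![γ,μ],![ν,ξ]])) *
            (Matrix.of (Sum.elim (fun _ : Fin k => ![(1:ℝ),0]) (fun _ : Fin (n-k) => ![0,1])))ᵀ) := by
      ext p q
      rcases p with i | i <;> rcases q with j | j <;>
        simp [hM, hE, hF, hS, hT, Matrix.mul_apply, Fin.sum_univ_two, Matrix.one_apply,
          Matrix.diagonal_apply, Sum.inl.injEq, Sum.inr.injEq, ha_def, hb_def,
          Matrix.vecMul, dotProduct, Matrix.transpose_apply, Matrix.of_apply,
          Sum.elim_inl, Sum.elim_inr, Matrix.cons_val_zero, Matrix.cons_val_one,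
          Matrix.head_cons] <;>
        split_ifs <;> ring
    show (x • (1 : Matrix (Fin k ⊕ Fin (n - k)) (Fin k ⊕ Fin (n - k)) ℝ) - M).det = _
    rw [hmat, aux_det _ _ _ _ _ _ _ _ ha hb]
    have hak : a ^ k = a ^ (k - 1) * a := by
      rw [← pow_succ]; congr 1; omega
    have hbm : b ^ (n - k) = b ^ (n - k - 1) * b := by
      rw [← pow_succ]; congr 1; omega
    rw [hak, hbm, hcast]
    field_simp
    ring
  have := congrFun hfg lam
  simpa [hf_def, hg_def] using this
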